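/- arXiv:2004.12279 — 6 statements merged into one kernel-verified Lean document; each statement's English description precedes it below -/
import Mathlib

section
/- Suppose $-1 < m < n$ with $m,n \neq 0$, and let $V(x) = -\frac{1}{m}x^{-m} + \frac{1}{n}x^{-n}$. Then for all $x$ with $0 < x < 1$, we have $V(1+x) < V(1-x)$. -/
/-!
Put `g(y) = V(1 - y) - V(1 + y)`, so `g 0 = 0` and `g' y = -(V'(1 - y) + V'(1 + y))` with
`V' t = t^(-a) - t^(-b)`, `a = m + 1`, `b = n + 1`, `0 < a < b`. For `u = 1 - y` and `v = 1 + y` one has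
`u < 1 < v < u⁻¹`, and the factorizations `V' v = v^(-b) (v^(b-a) - 1)`, `-V' u = u^(-a) (u^(-(b-a)) - 1)`
compare factor by factor, so `g' > 0` on `(0, 1)` and `g` is strictly increasing.
-/

open Set

theorem apply_add_lt_apply_sub_of_hasDerivAt {V V' : ℝ → ℝ} {c x : ℝ} (hx : 0 < x)
    (hV : ∀ t ∈ Icc (c - x) (c + x), HasDerivAt V (V' t) t)
    (hV' : ∀ y ∈ Ioo 0 x, V' (c - y) + V' (c + y) < 0) :
    V (c + x) < V (c - x) := by
  set g : ℝ → ℝ := fun y => V (c - y) - V (c + y)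
  have hg : ∀ y ∈ Icc 0 x, HasDerivAt g (-(V' (c - y) + V' (c + y))) y := by
    intro y ⟨hy0, hyx⟩
    have hl := (hV (c - y) ⟨by linarith, by linarith⟩).comp y ((hasDerivAt_id y).const_sub c)
    have hr := (hV (c + y) ⟨by linarith, by linarith⟩).comp y ((hasDerivAt_id y).const_add c)
    exact (hl.sub hr).congr_deriv (by ring)
  have hmono : StrictMonoOn g (Icc 0 x) := by
    refine strictMonoOn_of_deriv_pos (convex_Icc 0 x)
      (fun y hy => (hg y hy).continuousAt.continuousWithinAt) fun y hy => ?_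
    rw [interior_Icc] at hy
    rw [(hg y (Ioo_subset_Icc_self hy)).deriv]
    linarith [hV' y hy]
  have hg0x := hmono (left_mem_Icc.mpr hx.le) (right_mem_Icc.mpr hx.le) hx
  simp only [g, sub_zero, add_zero, sub_self] at hg0x
  linarith

theorem rpow_neg_sub_rpow_neg_lt {a b u v : ℝ} (ha : 0 < a) (hab : a < b) (hu : 0 < u)
    (hv : 1 < v) (huv : u * v < 1) :
    v ^ (-a) - v ^ (-b) < u ^ (-b) - u ^ (-a) := by
  have hu1 : u < 1 := by nlinarith
  have hvu : v < u⁻¹ := by rw [← one_div, lt_div_iff₀ hu]; linarith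
  have hv_fac : v ^ (-a) - v ^ (-b) = v ^ (-b) * (v ^ (b - a) - 1) := by
    rw [mul_sub, mul_one, ← Real.rpow_add (by linarith)]; ring_nf
  have hu_fac : u ^ (-b) - u ^ (-a) = u ^ (-a) * (u⁻¹ ^ (b - a) - 1) := by
    rw [Real.inv_rpow hu.le, ← Real.rpow_neg hu.le, mul_sub, mul_one, ← Real.rpow_add hu]
    ring_nf
  rw [hv_fac, hu_fac]
  apply mul_lt_mul''
  · calc v ^ (-b) < 1 := Real.rpow_lt_one_of_one_lt_of_neg hv (by linarith)
      _ < u ^ (-a) := Real.one_lt_rpow_of_pos_of_lt_one_of_neg hu hu1 (by linarith)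
  · exact sub_lt_sub_right (Real.rpow_lt_rpow (by linarith) hvu (by linarith)) 1
  · positivity
  · exact sub_nonneg.mpr (Real.one_le_rpow hv.le (by linarith))

theorem hasDerivAt_lennardJones {m n x : ℝ} (hm : m ≠ 0) (hn : n ≠ 0) (hx : 0 < x) :
    HasDerivAt (fun t : ℝ => -(1/m) * t ^ (-m) + (1/n) * t ^ (-n))
      (x ^ (-(m + 1)) - x ^ (-(n + 1))) x := by
  refine (((Real.hasDerivAt_rpow_const (p := -m) (Or.inl hx.ne')).const_mul (-(1/m))).add
    ((Real.hasDerivAt_rpow_const (p := -n) (Or.inl hx.ne')).const_mul (1/n))).congr_deriv ?_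
  rw [show -m - 1 = -(m + 1) by ring, show -n - 1 = -(n + 1) by ring]
  field_simp
  ring

theorem lj_asymmetry (m n : ℝ) (hm : -1 < m) (hmn : m < n) (hm0 : m ≠ 0) (hn0 : n ≠ 0)
    (V : ℝ → ℝ) (hV : ∀ x : ℝ, V x = -(1/m) * x ^ (-m) + (1/n) * x ^ (-n)) :
    ∀ x : ℝ, 0 < x → x < 1 → V (1 + x) < V (1 - x) := by
  intro x hx0 hx1
  obtain rfl : V = fun t => -(1/m) * t ^ (-m) + (1/n) * t ^ (-n) := funext hV
  refine apply_add_lt_apply_sub_of_hasDerivAt hx0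
    (fun t ht => hasDerivAt_lennardJones hm0 hn0 (by linarith [ht.1])) fun y ⟨hy0, hyx⟩ => ?_
  have key := rpow_neg_sub_rpow_neg_lt (by linarith : 0 < m + 1) (by linarith : m + 1 < n + 1)
    (by linarith : 0 < 1 - y) (by linarith : 1 < 1 + y) (by nlinarith)
  linarith
end

section
/- Suppose $0 = m < n$ and let $V(x) = \log x + \frac{1}{n}x^{-n}$ for $x > 0$. Then for all $x$ with $0 < x < 1$, we have $V(1+x) < V(1-x)$. -/
/-! `V(1 + s) - V(1 - s)` vanishes at `s = 0` and has derivative `V'(1 + s) + V'(1 - s)`, where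
`V'(y) = y⁻¹ - y^(-(n+1))`. With `a = 1 - s`, `b = 1 + s` this derivative is negative: by convexity
`a^(n+1) + b^(n+1) ≥ 2`, so `a^(-(n+1)) + b^(-(n+1)) ≥ 2 / (ab)^(n+1) > 2 / (ab) = a⁻¹ + b⁻¹`,
because `ab < 1`. -/

open Real Set

lemma inv_add_inv_lt_rpow_neg_add_rpow_neg {p a b : ℝ} (hp : 1 < p) (ha : 0 < a) (hb : 0 < b)
    (hsum : a + b = 2) (hab : a * b < 1) :
    a⁻¹ + b⁻¹ < a ^ (-p) + b ^ (-p) := by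
  have habpos : 0 < a * b := mul_pos ha hb
  have hmean : 2 ≤ a ^ p + b ^ p := by
    have h := (convexOn_rpow hp.le).2 (mem_Ici.2 ha.le) (mem_Ici.2 hb.le)
      (by norm_num : (0 : ℝ) ≤ 1 / 2) (by norm_num : (0 : ℝ) ≤ 1 / 2) (by norm_num)
    simp only [smul_eq_mul] at h
    rw [show (1 / 2 : ℝ) * a + 1 / 2 * b = 1 by linarith, one_rpow] at h
    linarith
  have hpow : (a * b) ^ p < a * b := rpow_lt_self_of_lt_one habpos hab hp
  calc a⁻¹ + b⁻¹ = 2 / (a * b) := by field_simp; linarith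
    _ < 2 / (a * b) ^ p := div_lt_div_of_pos_left two_pos (by positivity) hpow
    _ ≤ (a ^ p + b ^ p) / (a * b) ^ p := div_le_div_of_nonneg_right hmean (by positivity)
    _ = a ^ (-p) + b ^ (-p) := by
      rw [rpow_neg ha.le, rpow_neg hb.le, mul_rpow ha.le hb.le]
      field_simp
      ring

lemma apply_one_add_lt_apply_one_sub {f f' : ℝ → ℝ}
    (hf : ∀ y ∈ Ioo 0 2, HasDerivAt f (f' y) y)
    (hf' : ∀ s ∈ Ioo 0 1, f' (1 + s) + f' (1 - s) < 0) {x : ℝ} (hx₀ : 0 < x) (hx₁ : x < 1) :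
    f (1 + x) < f (1 - x) := by
  set G : ℝ → ℝ := fun s => f (1 + s) - f (1 - s)
  have hG : ∀ s ∈ Ioo (-1) 1, HasDerivAt G (f' (1 + s) + f' (1 - s)) s := by
    intro s ⟨hs₀, hs₁⟩
    have hplus := (hf (1 + s) ⟨by linarith, by linarith⟩).comp s ((hasDerivAt_id s).const_add 1)
    have hminus := (hf (1 - s) ⟨by linarith, by linarith⟩).comp s ((hasDerivAt_id s).const_sub 1)
    exact (hplus.sub hminus).congr_deriv (by simp)
  have hanti : StrictAntiOn G (Icc 0 x) := by
    refine strictAntiOn_of_hasDerivWithinAt_neg (f' := fun s => f' (1 + s) + f' (1 - s))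
      (convex_Icc 0 x)
      (fun s hs => (hG s ⟨by linarith [hs.1], by linarith [hs.2]⟩).continuousAt.continuousWithinAt)
      (fun s hs => ?_) (fun s hs => ?_) <;> rw [interior_Icc] at hs
    · exact (hG s ⟨by linarith [hs.1], by linarith [hs.2]⟩).hasDerivWithinAt
    · exact hf' s ⟨hs.1, by linarith [hs.2]⟩
  have h := hanti (left_mem_Icc.2 hx₀.le) (right_mem_Icc.2 hx₀.le) hx₀
  simp only [G, add_zero, sub_zero, sub_self] at h
  linarith

lemma hasDerivAt_log_add_rpow_neg {n y : ℝ} (hn : n ≠ 0) (hy : 0 < y) :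
    HasDerivAt (fun x => log x + (1 / n) * x ^ (-n)) (y⁻¹ - y ^ (-(n + 1))) y := by
  refine ((hasDerivAt_log hy.ne').add
    ((hasDerivAt_rpow_const (p := -n) (Or.inl hy.ne')).const_mul (1 / n))).congr_deriv ?_
  rw [show -n - 1 = -(n + 1) by ring]
  field_simp
  ring

theorem lj_asymmetry_log (n : ℝ) (hn : 0 < n)
    (V : ℝ → ℝ) (hV : ∀ x : ℝ, V x = Real.log x + (1/n) * x ^ (-n)) :
    ∀ x : ℝ, 0 < x → x < 1 → V (1 + x) < V (1 - x) := by
  obtain rfl : V = fun x => log x + (1 / n) * x ^ (-n) := funext hV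
  refine fun x hx₀ hx₁ => apply_one_add_lt_apply_one_sub
    (fun y hy => hasDerivAt_log_add_rpow_neg hn.ne' hy.1) (fun s ⟨hs₀, hs₁⟩ => ?_) hx₀ hx₁
  have key := inv_add_inv_lt_rpow_neg_add_rpow_neg (p := n + 1) (by linarith)
    (sub_pos.2 hs₁) (by linarith : (0 : ℝ) < 1 + s) (by ring) (by nlinarith)
  linarith
end

section
/- Let $0 < z < 1 < y$ and $-1 < m < n$. Then $\frac{y^{n+2} - z^{n+2}}{y^{m+2} - z^{m+2}} > y^{n-m} > 1$. -/
namespace Real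

theorem rpow_mul_rpow_sub_rpow_lt {y z : ℝ} (a : ℝ) {c : ℝ} (hz : 0 < z) (hzy : z < y)
    (hc : 0 < c) : y ^ c * (y ^ a - z ^ a) < y ^ (a + c) - z ^ (a + c) := by
  have hy : 0 < y := hz.trans hzy
  have hgap : 0 < z ^ a * (y ^ c - z ^ c) :=
    mul_pos (rpow_pos_of_pos hz a) (sub_pos.mpr (rpow_lt_rpow hz.le hzy hc))
  rw [rpow_add hy, rpow_add hz]
  linarith

theorem rpow_lt_div_rpow_sub_rpow {y z a b : ℝ} (hz : 0 < z) (hzy : z < y) (ha : 0 < a)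
    (hab : a < b) : y ^ (b - a) < (y ^ b - z ^ b) / (y ^ a - z ^ a) := by
  have hden : 0 < y ^ a - z ^ a := sub_pos.mpr (rpow_lt_rpow hz.le hzy ha)
  have hkey := rpow_mul_rpow_sub_rpow_lt a hz hzy (sub_pos.mpr hab)
  rwa [add_sub_cancel, ← lt_div_iff₀ hden] at hkey

end Real

theorem lj_key_inequality (y z m n : ℝ) (hz : 0 < z) (hz1 : z < 1) (hy : 1 < y)
    (hm : -1 < m) (hmn : m < n) :
    (y ^ (n + 2) - z ^ (n + 2)) / (y ^ (m + 2) - z ^ (m + 2)) > y ^ (n - m) ∧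
    y ^ (n - m) > 1 := by
  have hexp : n + 2 - (m + 2) = n - m := by ring
  refine ⟨?_, Real.one_lt_rpow hy (sub_pos.mpr hmn)⟩
  rw [gt_iff_lt, ← hexp]
  exact Real.rpow_lt_div_rpow_sub_rpow hz (hz1.trans hy) (by linarith) (by linarith)
end

section
/- Suppose $-1 < m < n$, $m,n \neq 0$, with pair potential $V(x) = -\frac{1}{m}x^{-m} + \frac{1}{n}x^{-n}$. For $N \geq 2$, $0 \leq \alpha \leq 1$, define the energy $E[Y_N] = \sum_{1 \le i < j \le N,\ j - i \le \lfloor N^\alpha \rfloor} V(y_j - y_i)$ on configurations $y_1 < \cdots < y_N$. If $X_N = (x_1, \ldots, x_N)$ is a critical point of $E$ (i.e., all partial derivatives $\partial E/\partial x_i$ vanish), then $x_{i+1} - x_i \le 1$ for every $i = 1, \ldots, N-1$. -/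
/-!
Cut the chain between sites `c` and `c + 1` and add up the force balance equations of all
sites to the right of the cut. Bonds inside the right block cancel in pairs, so what remains
is the total force `∑ V'(x_q - x_p)` over the bonds `p ≤ c < q` crossing the cut, which must
vanish. If `x_{c+1} - x_c > 1`, every crossing bond is longer than `1`, where `V' > 0`, and the
nearest-neighbour bond `(c, c + 1)` always interacts since `⌊N^α⌋ ≥ 1`: the total force is
positive, a contradiction.
-/

/-- The truncated pairwise interaction energy of the generalized LJ model:
steps `i < j` interact iff `j - i ≤ ⌊N^α⌋`. -/
noncomputable def ljEnergy (N : ℕ) (α : ℝ) (V : ℝ → ℝ) (y : Fin N → ℝ) : ℝ :=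
  ∑ p ∈ Finset.univ.filter
      (fun p : Fin N × Fin N => p.1 < p.2 ∧ (p.2 : ℕ) - (p.1 : ℕ) ≤ ⌊(N : ℝ) ^ α⌋₊),
    V (y p.2 - y p.1)

open Finset

noncomputable section

namespace LJChain

/-- `ljEnergy N α V y` is definitionally `∑ p ∈ ljBonds N α, V (y p.2 - y p.1)`. -/
def ljBonds (N : ℕ) (α : ℝ) : Finset (Fin N × Fin N) :=
  univ.filter fun p : Fin N × Fin N => p.1 < p.2 ∧ (p.2 : ℕ) - (p.1 : ℕ) ≤ ⌊(N : ℝ) ^ α⌋₊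

theorem mem_ljBonds_succ {N : ℕ} {α : ℝ} (hα : 0 ≤ α) (c : Fin N) (hc : (c : ℕ) + 1 < N) :
    (c, ⟨(c : ℕ) + 1, hc⟩) ∈ ljBonds N α := by
  have hN : (1 : ℝ) ≤ N := by exact_mod_cast (by omega : 1 ≤ N)
  have hfloor : 1 ≤ ⌊(N : ℝ) ^ α⌋₊ := Nat.le_floor (by simpa using Real.one_le_rpow hN hα)
  simp only [ljBonds, mem_filter, mem_univ, true_and, Fin.lt_def]
  omega

theorem hasDerivAt_lj_potential {m n : ℝ} (hm0 : m ≠ 0) (hn0 : n ≠ 0) {V : ℝ → ℝ}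
    (hV : ∀ x : ℝ, V x = -(1/m) * x ^ (-m) + (1/n) * x ^ (-n)) {y : ℝ} (hy : 0 < y) :
    HasDerivAt V (y ^ (-m - 1) - y ^ (-n - 1)) y := by
  have hdm := (Real.hasDerivAt_rpow_const (p := -m) (Or.inl hy.ne')).const_mul (-(1/m))
  have hdn := (Real.hasDerivAt_rpow_const (p := -n) (Or.inl hy.ne')).const_mul (1/n)
  rw [funext hV]
  refine (hdm.fun_add hdn).congr_deriv ?_
  field_simp
  ring

theorem lj_force_pos {m n y : ℝ} (hmn : m < n) (hy : 1 < y) :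
    0 < y ^ (-m - 1) - y ^ (-n - 1) :=
  sub_pos.mpr <| (Real.rpow_lt_rpow_left_iff hy).mpr (by linarith)

section Forces

variable {ι : Type*} [DecidableEq ι]

def bondForce (V' : ℝ → ℝ) (y : ι → ℝ) (i : ι) (p : ι × ι) : ℝ :=
  (if p.2 = i then V' (y p.2 - y p.1) else 0) - (if p.1 = i then V' (y p.2 - y p.1) else 0)

theorem hasDerivAt_bond_update {V V' : ℝ → ℝ} {y : ι → ℝ} {p : ι × ι} (hp : p.1 ≠ p.2)
    (hV : HasDerivAt V (V' (y p.2 - y p.1)) (y p.2 - y p.1)) (i : ι) :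
    HasDerivAt (fun t => V (Function.update y i t p.2 - Function.update y i t p.1))
      (bondForce V' y i p) (y i) := by
  unfold bondForce
  by_cases h1 : p.1 = i
  · have h2 : p.2 ≠ i := fun h => hp (h1.trans h.symm)
    subst h1
    simp only [Function.update_of_ne h2, Function.update_self, if_neg h2, if_true, zero_sub]
    simpa [Function.comp_def] using hV.comp (y p.1) ((hasDerivAt_id (y p.1)).const_sub (y p.2))
  · by_cases h2 : p.2 = i
    · subst h2
      simp only [Function.update_of_ne h1, Function.update_self, if_neg h1, if_true, sub_zero]
      simpa [Function.comp_def] using hV.comp (y p.2) ((hasDerivAt_id (y p.2)).sub_const (y p.1))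
    · simp only [Function.update_of_ne h1, Function.update_of_ne h2, if_neg h1, if_neg h2,
        sub_zero]
      exact hasDerivAt_const _ _

theorem hasDerivAt_sum_bond_update {V V' : ℝ → ℝ} {y : ι → ℝ} {P : Finset (ι × ι)}
    (hP : ∀ p ∈ P, p.1 ≠ p.2)
    (hV : ∀ p ∈ P, HasDerivAt V (V' (y p.2 - y p.1)) (y p.2 - y p.1)) (i : ι) :
    HasDerivAt (fun t => ∑ p ∈ P, V (Function.update y i t p.2 - Function.update y i t p.1))
      (∑ p ∈ P, bondForce V' y i p) (y i) :=
  HasDerivAt.fun_sum fun p hp => hasDerivAt_bond_update (hP p hp) (hV p hp) i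

theorem sum_bondForce (V' : ℝ → ℝ) (y : ι → ℝ) (T : Finset ι) (p : ι × ι) :
    ∑ i ∈ T, bondForce V' y i p =
      (if p.2 ∈ T then V' (y p.2 - y p.1) else 0) -
        (if p.1 ∈ T then V' (y p.2 - y p.1) else 0) := by
  simp only [bondForce, sum_sub_distrib, sum_ite_eq]

theorem sum_bondForce_Ioi_pos [LinearOrder ι] [LocallyFiniteOrderTop ι]
    {V' : ℝ → ℝ} {y : ι → ℝ} {P : Finset (ι × ι)} (hP : ∀ p ∈ P, p.1 < p.2) (c : ι)
    (hcross : ∀ p ∈ P, p.1 ≤ c → c < p.2 → 0 < V' (y p.2 - y p.1))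
    (hex : ∃ p ∈ P, p.1 ≤ c ∧ c < p.2) :
    0 < ∑ p ∈ P, ∑ i ∈ Ioi c, bondForce V' y i p := by
  simp only [sum_bondForce, mem_Ioi]
  refine sum_pos' (fun p hp => ?_) ?_
  · by_cases h1 : c < p.1
    · simp [h1, h1.trans (hP p hp)]
    · by_cases h2 : c < p.2
      · simpa [h1, h2] using (hcross p hp (not_lt.mp h1) h2).le
      · simp [h1, h2]
  · obtain ⟨p, hp, h1, h2⟩ := hex
    exact ⟨p, hp, by simpa [not_lt.mpr h1, h2] using hcross p hp h1 h2⟩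

end Forces

end LJChain

end

open LJChain in
theorem terrace_length_upper_bound_general
    (m n : ℝ) (hmn : m < n) (hm0 : m ≠ 0) (hn0 : n ≠ 0)
    (V : ℝ → ℝ) (hV : ∀ x : ℝ, V x = -(1/m) * x ^ (-m) + (1/n) * x ^ (-n))
    (N : ℕ) (α : ℝ) (hα0 : 0 ≤ α)
    (x : Fin N → ℝ) (hx : StrictMono x)
    (hcrit : ∀ i : Fin N,
      HasDerivAt (fun t => ljEnergy N α V (Function.update x i t)) 0 (x i)) :
    ∀ i : Fin N, ∀ hi : (i : ℕ) + 1 < N, x ⟨(i : ℕ) + 1, hi⟩ - x i ≤ 1 := by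
  intro c hc
  by_contra! hgap
  set W : ℝ → ℝ := fun y => y ^ (-m - 1) - y ^ (-n - 1)
  have hbond : ∀ p ∈ ljBonds N α, p.1 < p.2 := fun p hp => (mem_filter.mp hp).2.1
  have hforce : ∀ i, ∑ p ∈ ljBonds N α, bondForce W x i p = 0 := fun i =>
    (hasDerivAt_sum_bond_update (fun p hp => (hbond p hp).ne) (fun p hp =>
      hasDerivAt_lj_potential hm0 hn0 hV (sub_pos.mpr (hx (hbond p hp)))) i).unique (hcrit i)
  have hcut : ∑ p ∈ ljBonds N α, ∑ i ∈ Ioi c, bondForce W x i p = 0 := by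
    rw [sum_comm]
    exact sum_eq_zero fun i _ => hforce i
  refine hcut.not_gt (sum_bondForce_Ioi_pos hbond c (fun p _ h1 h2 => lj_force_pos hmn ?_)
    ⟨_, mem_ljBonds_succ hα0 c hc, le_rfl, Fin.lt_def.mpr (Nat.lt_succ_self _)⟩)
  have : x ⟨(c : ℕ) + 1, hc⟩ ≤ x p.2 := hx.monotone (Fin.le_def.mpr h2)
  linarith [hx.monotone h1]

theorem terrace_length_upper_bound
    (m n : ℝ) (hm : -1 < m) (hmn : m < n) (hm0 : m ≠ 0) (hn0 : n ≠ 0)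
    (V : ℝ → ℝ) (hV : ∀ x : ℝ, V x = -(1/m) * x ^ (-m) + (1/n) * x ^ (-n))
    (N : ℕ) (hN : 2 ≤ N) (α : ℝ) (hα0 : 0 ≤ α) (hα1 : α ≤ 1)
    (x : Fin N → ℝ) (hx : StrictMono x)
    (hcrit : ∀ i : Fin N,
      HasDerivAt (fun t => ljEnergy N α V (Function.update x i t)) 0 (x i)) :
    ∀ i : Fin N, ∀ hi : (i : ℕ) + 1 < N, x ⟨(i : ℕ) + 1, hi⟩ - x i ≤ 1 :=
  terrace_length_upper_bound_general m n hmn hm0 hn0 V hV N α hα0 x hx hcrit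
end

section
/- Let $-1 < m < n$, $1 < n$, $m, n \neq 0$, $0 < \alpha \le 1$, and $V(x) = -\frac{1}{m}x^{-m} + \frac{1}{n}x^{-n}$. There exist constants $C > 0$ and $N_0$ such that for all $N > N_0$: if $X_N$ is a critical point of the truncated energy $E$ and $\lambda_N = \min_i (x_{i+1} - x_i) < 1/2$, then $\lambda_N \ge C N^{-2\alpha/(n+1)}$. In particular $\lambda_N \gg N^{-\alpha}$ as $N \to \infty$. -/
open Finset Function

theorem hasDerivAt_ljPotential {m n ξ : ℝ} (hm0 : m ≠ 0) (hn0 : n ≠ 0) (hξ : 0 < ξ) :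
    HasDerivAt (fun x : ℝ => -(1/m) * x ^ (-m) + (1/n) * x ^ (-n))
      (ξ ^ (-m-1) - ξ ^ (-n-1)) ξ := by
  have hm := (Real.hasDerivAt_rpow_const (p := -m) (Or.inl hξ.ne')).const_mul (-(1/m))
  have hn := (Real.hasDerivAt_rpow_const (p := -n) (Or.inl hξ.ne')).const_mul (1/n)
  refine (hm.fun_add hn).congr_deriv ?_
  field_simp
  ring

theorem rpow_sub_rpow_le_one {a b ξ : ℝ} (ha : a ≤ 0) (hba : b ≤ a) (hξ : 0 < ξ) :
    ξ ^ a - ξ ^ b ≤ 1 := by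
  rcases le_or_gt 1 ξ with h | h
  · linarith [Real.rpow_le_one_of_one_le_of_nonpos h ha, Real.rpow_nonneg hξ.le b]
  · linarith [Real.rpow_le_rpow_of_exponent_ge hξ h.le hba]

theorem hasDerivAt_sum_pairPotential {ι : Type*} [Fintype ι] [DecidableEq ι]
    (S : Finset (ι × ι)) {V V' : ℝ → ℝ} (x : ι → ℝ)
    (hV : ∀ p ∈ S, HasDerivAt V (V' (x p.2 - x p.1)) (x p.2 - x p.1)) (j : ι) :
    HasDerivAt (fun t => ∑ p ∈ S, V (update x j t p.2 - update x j t p.1))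
      (∑ p ∈ S, V' (x p.2 - x p.1) *
        ((Pi.single j 1 : ι → ℝ) p.2 - (Pi.single j 1 : ι → ℝ) p.1)) (x j) := by
  refine HasDerivAt.fun_sum fun p hp => ?_
  have hupdate := hasDerivAt_pi.mp (hasDerivAt_update x j (x j))
  have hdiff := (hupdate p.2).sub (hupdate p.1)
  exact (hV p hp).comp_of_eq (x j) hdiff (by simp only [update_eq_self])

theorem sum_crossing_eq_zero_of_balanced {ι R : Type*} [Fintype ι] [LinearOrder ι] [Ring R]
    (S : Finset (ι × ι)) (hS : ∀ p ∈ S, p.1 < p.2) (W : ι × ι → R)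
    (hW : ∀ j, ∑ p ∈ S, W p * ((Pi.single j 1 : ι → R) p.2 - (Pi.single j 1 : ι → R) p.1) = 0)
    (i : ι) :
    ∑ p ∈ S with p.1 ≤ i ∧ i < p.2, W p = 0 := by
  have hleft : ∑ j with j ≤ i,
      ∑ p ∈ S, W p * ((Pi.single j 1 : ι → R) p.2 - (Pi.single j 1 : ι → R) p.1) = 0 :=
    sum_eq_zero fun j _ => hW j
  rw [sum_comm] at hleft
  simp only [← mul_sum, sum_sub_distrib, sum_pi_single, mem_filter, mem_univ, true_and] at hleft
  calc ∑ p ∈ S with p.1 ≤ i ∧ i < p.2, W p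
      = -∑ p ∈ S, W p * ((if p.2 ≤ i then 1 else 0) - if p.1 ≤ i then 1 else 0) := by
        rw [sum_filter, ← sum_neg_distrib]
        refine sum_congr rfl fun p hp => ?_
        have h12 := hS p hp
        by_cases h2 : p.2 ≤ i
        · simp [h2, h12.le.trans h2]
        · by_cases h1 : p.1 ≤ i <;> simp [h1, h2]
    _ = 0 := by rw [hleft, neg_zero]

def interactingPairs (N K : ℕ) : Finset (Fin N × Fin N) :=
  {p | p.1 < p.2 ∧ (p.2 : ℕ) - p.1 ≤ K}

theorem ljEnergy_eq_sum_interactingPairs (N : ℕ) (α : ℝ) (V : ℝ → ℝ) (y : Fin N → ℝ) :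
    ljEnergy N α V y = ∑ p ∈ interactingPairs N ⌊(N : ℝ) ^ α⌋₊, V (y p.2 - y p.1) :=
  rfl

theorem card_crossing_interactingPairs_le (N K : ℕ) (i : Fin N) :
    #{p ∈ interactingPairs N K | p.1 ≤ i ∧ i < p.2} ≤ K * K := by
  refine (card_le_card_of_injOn (fun p => ((i : ℕ) - p.1, (p.2 : ℕ) - i - 1))
    (t := range K ×ˢ range K) ?_ ?_).trans (by simp)
  · intro p hp
    simp only [mem_coe, interactingPairs, mem_filter, mem_univ, true_and, Fin.lt_def,
      Fin.le_def] at hp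
    simp only [coe_product, coe_range, Set.mem_prod, Set.mem_Iio]
    omega
  · intro p hp q hq hpq
    simp only [mem_coe, interactingPairs, mem_filter, mem_univ, true_and, Fin.lt_def,
      Fin.le_def] at hp hq
    simp only [Prod.mk.injEq] at hpq
    ext <;> omega

theorem sum_crossing_ljForce_eq_zero {m n α : ℝ} (hm0 : m ≠ 0) (hn0 : n ≠ 0) {N : ℕ}
    {V : ℝ → ℝ} (hV : ∀ x : ℝ, V x = -(1/m) * x ^ (-m) + (1/n) * x ^ (-n))
    {x : Fin N → ℝ} (hx : StrictMono x)
    (hcrit : ∀ i : Fin N,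
      HasDerivAt (fun t => ljEnergy N α V (update x i t)) 0 (x i)) (i : Fin N) :
    ∑ p ∈ interactingPairs N ⌊(N : ℝ) ^ α⌋₊ with p.1 ≤ i ∧ i < p.2,
      ((x p.2 - x p.1) ^ (-m-1) - (x p.2 - x p.1) ^ (-n-1)) = 0 := by
  obtain rfl : V = _ := funext hV
  have hpos : ∀ p ∈ interactingPairs N ⌊(N : ℝ) ^ α⌋₊, p.1 < p.2 :=
    fun p hp => (mem_filter.mp hp).2.1
  refine sum_crossing_eq_zero_of_balanced _ hpos _ (fun j => ?_) i
  simp only [ljEnergy_eq_sum_interactingPairs] at hcrit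
  exact (hasDerivAt_sum_pairPotential _ x (V' := fun ξ => ξ ^ (-m-1) - ξ ^ (-n-1)) (fun p hp =>
    hasDerivAt_ljPotential hm0 hn0 (sub_pos.mpr (hx (hpos p hp)))) j).unique (hcrit j)

theorem gap_repulsion_le {m n α : ℝ} (hm : -1 < m) (hmn : m < n) (hm0 : m ≠ 0) (hn0 : n ≠ 0)
    (hα : 0 ≤ α) {N : ℕ} {V : ℝ → ℝ}
    (hV : ∀ x : ℝ, V x = -(1/m) * x ^ (-m) + (1/n) * x ^ (-n))
    {x : Fin N → ℝ} (hx : StrictMono x)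
    (hcrit : ∀ i : Fin N,
      HasDerivAt (fun t => ljEnergy N α V (update x i t)) 0 (x i))
    (i : Fin N) (hi : (i : ℕ) + 1 < N) {lam : ℝ} (hgap : x ⟨(i : ℕ) + 1, hi⟩ - x i = lam) :
    lam ^ (-n-1) - lam ^ (-m-1) ≤ (N : ℝ) ^ (2 * α) := by
  set K := ⌊(N : ℝ) ^ α⌋₊
  set T := {p ∈ interactingPairs N K | p.1 ≤ i ∧ i < p.2}
  have hN : (1 : ℝ) ≤ N := by exact_mod_cast (Nat.zero_lt_of_lt hi)
  have hK : 1 ≤ K := Nat.le_floor (by simpa using Real.one_le_rpow hN hα)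
  have hnext : i < ⟨(i : ℕ) + 1, hi⟩ := Fin.lt_def.mpr (Nat.lt_succ_self _)
  have hmem : (i, ⟨(i : ℕ) + 1, hi⟩) ∈ T := by
    simp only [T, interactingPairs, mem_filter, mem_univ, true_and]
    exact ⟨⟨hnext, by simpa using hK⟩, le_rfl, hnext⟩
  have hbalance := sum_crossing_ljForce_eq_zero hm0 hn0 hV hx hcrit i
  rw [← add_sum_erase T _ hmem] at hbalance
  simp only [hgap] at hbalance
  have hrest : ∑ p ∈ T.erase (i, ⟨(i : ℕ) + 1, hi⟩),
      ((x p.2 - x p.1) ^ (-m-1) - (x p.2 - x p.1) ^ (-n-1)) ≤ #T := by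
    refine (sum_le_card_nsmul _ _ 1 fun p hp => rpow_sub_rpow_le_one (by linarith) (by linarith)
      (sub_pos.mpr (hx (mem_filter.mp (mem_filter.mp (mem_of_mem_erase hp)).1).2.1))).trans ?_
    simpa using card_erase_le
  have hcard : (#T : ℝ) ≤ (N : ℝ) ^ (2 * α) := calc
    (#T : ℝ) ≤ K * K := by exact_mod_cast card_crossing_interactingPairs_le N K i
    _ ≤ (N : ℝ) ^ α * (N : ℝ) ^ α := by
      have := Nat.floor_le (Real.rpow_nonneg (Nat.cast_nonneg N) α)
      gcongr
    _ = (N : ℝ) ^ (2 * α) := by rw [← Real.rpow_add (by linarith)]; ring_nf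
  linarith

theorem mul_rpow_le_rpow_sub_rpow {lam a b : ℝ} (hlam : 0 < lam) (hhalf : lam ≤ 1/2)
    (hba : b ≤ a) :
    (1 - (1/2 : ℝ) ^ (a - b)) * lam ^ b ≤ lam ^ b - lam ^ a := by
  have hsplit : lam ^ a = lam ^ b * lam ^ (a - b) := by
    rw [← Real.rpow_add hlam]; ring_nf
  have hsmall : lam ^ (a - b) ≤ (1/2 : ℝ) ^ (a - b) :=
    Real.rpow_le_rpow hlam.le hhalf (by linarith)
  rw [hsplit]
  nlinarith [Real.rpow_nonneg hlam.le b]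

theorem rpow_mul_rpow_le_of_mul_rpow_neg_le {c lam M k a : ℝ} (hc : 0 ≤ c) (hlam : 0 < lam)
    (hM : 0 < M) (hk : 0 < k) (h : c * lam ^ (-k) ≤ M ^ a) :
    c ^ (1 / k) * M ^ (-a / k) ≤ lam := by
  have hMa := Real.rpow_pos_of_pos hM a
  have hlamk := Real.rpow_pos_of_pos hlam k
  have h' : c * M ^ (-a) ≤ lam ^ k := by
    rw [Real.rpow_neg hlam.le, ← div_eq_mul_inv, div_le_iff₀ hlamk] at h
    rw [Real.rpow_neg hM.le, ← div_eq_mul_inv, div_le_iff₀' hMa]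
    exact h
  calc c ^ (1 / k) * M ^ (-a / k) = (c * M ^ (-a)) ^ (1 / k) := by
        rw [Real.mul_rpow hc (Real.rpow_nonneg hM.le _), ← Real.rpow_mul hM.le]
        ring_nf
    _ ≤ (lam ^ k) ^ (1 / k) := Real.rpow_le_rpow (by positivity) h' (by positivity)
    _ = lam := by rw [← Real.rpow_mul hlam.le, mul_one_div_cancel hk.ne', Real.rpow_one]

theorem minimal_terrace_weak_lower_bound_general
    (m n : ℝ) (hm : -1 < m) (hmn : m < n) (hm0 : m ≠ 0) (hn0 : n ≠ 0)
    (α : ℝ) (hα0 : 0 < α)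
    (V : ℝ → ℝ) (hV : ∀ x : ℝ, V x = -(1/m) * x ^ (-m) + (1/n) * x ^ (-n)) :
    ∃ C > (0 : ℝ), ∃ N₀ : ℕ, ∀ N : ℕ, N > N₀ →
      ∀ x : Fin N → ℝ, StrictMono x →
      (∀ i : Fin N,
        HasDerivAt (fun t => ljEnergy N α V (Function.update x i t)) 0 (x i)) →
      ∀ lam : ℝ,
        (∀ i : Fin N, ∀ hi : (i : ℕ) + 1 < N, lam ≤ x ⟨(i : ℕ) + 1, hi⟩ - x i) →
        (∃ i : Fin N, ∃ hi : (i : ℕ) + 1 < N, x ⟨(i : ℕ) + 1, hi⟩ - x i = lam) →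
        lam < 1/2 →
        lam ≥ C * (N : ℝ) ^ (-(2 * α) / (n + 1)) := by
  have hc : 0 < 1 - (1/2 : ℝ) ^ (n - m) :=
    sub_pos.mpr (Real.rpow_lt_one (by norm_num) (by norm_num) (by linarith))
  refine ⟨_, Real.rpow_pos_of_pos hc (1 / (n + 1)), 0,
    fun N hN x hx hcrit lam _ ⟨i, hi, hgap⟩ hhalf => ?_⟩
  have hlam : 0 < lam := hgap ▸ sub_pos.mpr (hx (Fin.lt_def.mpr (Nat.lt_succ_self _)))
  have hforce := (mul_rpow_le_rpow_sub_rpow hlam hhalf.le (show -n-1 ≤ -m-1 by linarith)).trans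
    (gap_repulsion_le hm hmn hm0 hn0 hα0.le hV hx hcrit i hi hgap)
  rw [show (-m-1) - (-n-1) = n - m by ring, show -n-1 = -(n+1) by ring] at hforce
  exact rpow_mul_rpow_le_of_mul_rpow_neg_le hc.le hlam (Nat.cast_pos.mpr hN) (by linarith) hforce

theorem minimal_terrace_weak_lower_bound
    (m n : ℝ) (hm : -1 < m) (hmn : m < n) (hn1 : 1 < n) (hm0 : m ≠ 0) (hn0 : n ≠ 0)
    (α : ℝ) (hα0 : 0 < α) (hα1 : α ≤ 1)
    (V : ℝ → ℝ) (hV : ∀ x : ℝ, V x = -(1/m) * x ^ (-m) + (1/n) * x ^ (-n)) :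
    ∃ C > (0 : ℝ), ∃ N₀ : ℕ, ∀ N : ℕ, N > N₀ →
      ∀ x : Fin N → ℝ, StrictMono x →
      (∀ i : Fin N,
        HasDerivAt (fun t => ljEnergy N α V (Function.update x i t)) 0 (x i)) →
      ∀ lam : ℝ,
        (∀ i : Fin N, ∀ hi : (i : ℕ) + 1 < N, lam ≤ x ⟨(i : ℕ) + 1, hi⟩ - x i) →
        (∃ i : Fin N, ∃ hi : (i : ℕ) + 1 < N, x ⟨(i : ℕ) + 1, hi⟩ - x i = lam) →
        lam < 1/2 →
        lam ≥ C * (N : ℝ) ^ (-(2 * α) / (n + 1)) :=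
  minimal_terrace_weak_lower_bound_general m n hm hmn hm0 hn0 α hα0 V hV
end

section
/- Let $0 < m < 1$, $N \ge 2$ an integer, $0 < \alpha \le 1$, and $l_0 > 0$. Then $\frac{1}{m} l_0^{-m}\left(\sum_{k=1}^{\lfloor N^\alpha\rfloor} k^{1-m} - N \sum_{k=1}^{\lfloor N^\alpha\rfloor} k^{-m}\right) \le -\frac{1}{m(1-m)(2-m)} l_0^{-m} N^{1 + \alpha(1-m)} + \frac{3}{m(1-m)} l_0^{-m} N$. -/
/-!
Compare the sums with the integrals of $x^{-m}$ and $x^{1-m}$ over $[1, M+1]$,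
$M = \lfloor N^\alpha \rfloor$: the tangent-line inequalities of $x \mapsto x^p$ (convex for
$p \ge 1$, concave for $p \le 1$) between consecutive integers telescope to
$(1-m)\sum k^{-m} \ge (M+1)^{1-m} - 1 \ge N^{\alpha(1-m)} - 1$ and
$(2-m)\sum k^{1-m} \le (M+1)^{2-m} - 1$. One more tangent-line step and $\alpha \le 1$ give
$(M+1)^{2-m} \le N^{\alpha(2-m)} + (2-m)(N^\alpha + 1)^{1-m} \le N^{1+\alpha(1-m)} + 2(2-m)N$.
Multiplying out, the leading terms combine to $-N^{1+\alpha(1-m)}$ since $(2-m) - (1-m) = 1$.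
-/

open Finset

namespace Real

variable {p x y : ℝ}

lemma rpow_eq_rpow_mul_one_add_div_sub_one (hx : 0 < x) (hy : 0 ≤ y) :
    y ^ p = x ^ p * (1 + (y / x - 1)) ^ p := by
  rw [add_sub_cancel, ← mul_rpow hx.le (div_nonneg hy hx.le), mul_div_cancel₀ y hx.ne']

lemma rpow_add_mul_sub_le_rpow (hp : 1 ≤ p) (hx : 0 < x) (hy : 0 ≤ y) :
    x ^ p + p * x ^ (p - 1) * (y - x) ≤ y ^ p := by
  have hs : -1 ≤ y / x - 1 := by linarith [div_nonneg hy hx.le]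
  calc x ^ p + p * x ^ (p - 1) * (y - x) = x ^ p * (1 + p * (y / x - 1)) := by
        rw [rpow_sub_one hx.ne']; field_simp
    _ ≤ x ^ p * (1 + (y / x - 1)) ^ p := by
        gcongr; exact one_add_mul_self_le_rpow_one_add hs hp
    _ = y ^ p := (rpow_eq_rpow_mul_one_add_div_sub_one hx hy).symm

lemma rpow_le_rpow_add_mul_sub (hp₀ : 0 ≤ p) (hp₁ : p ≤ 1) (hx : 0 < x) (hy : 0 ≤ y) :
    y ^ p ≤ x ^ p + p * x ^ (p - 1) * (y - x) := by
  have hs : -1 ≤ y / x - 1 := by linarith [div_nonneg hy hx.le]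
  calc y ^ p = x ^ p * (1 + (y / x - 1)) ^ p := rpow_eq_rpow_mul_one_add_div_sub_one hx hy
    _ ≤ x ^ p * (1 + p * (y / x - 1)) := by
        gcongr; exact rpow_one_add_le_one_add_mul_self hs hp₀ hp₁
    _ = x ^ p + p * x ^ (p - 1) * (y - x) := by
        rw [rpow_sub_one hx.ne']; field_simp

end Real

section PowerSums

variable {p : ℝ} (M : ℕ)

lemma sum_Icc_rpow_telescope :
    ∑ k ∈ Icc 1 M, (((k : ℝ) + 1) ^ p - (k : ℝ) ^ p) = ((M : ℝ) + 1) ^ p - 1 := by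
  have h := sum_Ico_sub (fun k : ℕ ↦ (k : ℝ) ^ p) (Nat.le_add_left 1 M)
  push_cast at h
  rwa [Finset.Ico_add_one_right_eq_Icc, Real.one_rpow] at h

lemma mul_sum_Icc_rpow_sub_one_le (hp : 1 ≤ p) :
    p * ∑ k ∈ Icc 1 M, (k : ℝ) ^ (p - 1) ≤ ((M : ℝ) + 1) ^ p - 1 := by
  rw [← sum_Icc_rpow_telescope, mul_sum]
  refine sum_le_sum fun k hk ↦ ?_
  have hk : (0 : ℝ) < k := by exact_mod_cast (mem_Icc.1 hk).1
  linarith [Real.rpow_add_mul_sub_le_rpow hp hk (by positivity : (0 : ℝ) ≤ k + 1)]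

lemma rpow_sub_one_le_mul_sum_Icc_rpow_sub_one (hp₀ : 0 ≤ p) (hp₁ : p ≤ 1) :
    ((M : ℝ) + 1) ^ p - 1 ≤ p * ∑ k ∈ Icc 1 M, (k : ℝ) ^ (p - 1) := by
  rw [← sum_Icc_rpow_telescope, mul_sum]
  refine sum_le_sum fun k hk ↦ ?_
  have hk : (0 : ℝ) < k := by exact_mod_cast (mem_Icc.1 hk).1
  linarith [Real.rpow_le_rpow_add_mul_sub hp₀ hp₁ hk (by positivity : (0 : ℝ) ≤ k + 1)]

end PowerSums

section FloorSums

variable {p x : ℝ}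

lemma rpow_sub_one_le_mul_sum_Icc_floor_rpow_sub_one (hp₀ : 0 ≤ p) (hp₁ : p ≤ 1)
    (hx : 0 ≤ x) :
    x ^ p - 1 ≤ p * ∑ k ∈ Icc 1 ⌊x⌋₊, (k : ℝ) ^ (p - 1) := by
  have hfloor : x ^ p ≤ ((⌊x⌋₊ : ℝ) + 1) ^ p :=
    Real.rpow_le_rpow hx (Nat.lt_floor_add_one x).le hp₀
  linarith [rpow_sub_one_le_mul_sum_Icc_rpow_sub_one ⌊x⌋₊ hp₀ hp₁]

lemma mul_sum_Icc_floor_rpow_sub_one_le (hp : 1 ≤ p) (hx : 0 ≤ x) :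
    p * ∑ k ∈ Icc 1 ⌊x⌋₊, (k : ℝ) ^ (p - 1) ≤ x ^ p + p * (x + 1) ^ (p - 1) - 1 := by
  have hfloor : ((⌊x⌋₊ : ℝ) + 1) ^ p ≤ (x + 1) ^ p := by
    gcongr; exact Nat.floor_le hx
  -- tangent line of the convex `t ↦ t ^ p` at `x + 1`, evaluated at `x`
  have htangent := Real.rpow_add_mul_sub_le_rpow hp (by linarith : 0 < x + 1) hx
  linarith [mul_sum_Icc_rpow_sub_one_le ⌊x⌋₊ hp]

end FloorSums

lemma Real.rpow_rpow_one_add_le {N α β : ℝ} (hN : 1 ≤ N) (hα : α ≤ 1) :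
    (N ^ α) ^ (1 + β) ≤ N ^ (1 + α * β) := by
  rw [← Real.rpow_mul (by linarith)]
  exact Real.rpow_le_rpow_of_exponent_le hN (by nlinarith)

lemma two_sub_mul_sum_Icc_floor_rpow_one_sub_le {N α m : ℝ} (hN : 1 ≤ N) (hα : α ≤ 1)
    (hm₀ : 0 ≤ m) (hm₁ : m ≤ 1) :
    (2 - m) * ∑ k ∈ Icc 1 ⌊N ^ α⌋₊, (k : ℝ) ^ (1 - m) ≤
      N ^ (1 + α * (1 - m)) + (2 - m) * (2 * N) - 1 := by
  have ha₀ : 0 ≤ N ^ α := Real.rpow_nonneg (by linarith) α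
  have ha : N ^ α ≤ N := Real.rpow_le_self_of_one_le hN hα
  have hsum := mul_sum_Icc_floor_rpow_sub_one_le (by linarith : 1 ≤ 2 - m) ha₀
  rw [show 2 - m - 1 = 1 - m by ring] at hsum
  have hpow : (N ^ α) ^ (2 - m) ≤ N ^ (1 + α * (1 - m)) := by
    have h := Real.rpow_rpow_one_add_le (β := 1 - m) hN hα
    rwa [show 1 + (1 - m) = 2 - m by ring] at h
  have hpow' : (N ^ α + 1) ^ (1 - m) ≤ 2 * N :=
    (Real.rpow_le_self_of_one_le (by linarith) (by linarith)).trans (by linarith)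
  nlinarith [mul_le_mul_of_nonneg_left hpow' (by linarith : (0 : ℝ) ≤ 2 - m)]

theorem attractive_energy_uniform_train_bound_m01_general
    (m : ℝ) (hm0 : 0 < m) (hm1 : m < 1) (N : ℕ) (hN : 2 ≤ N)
    (α : ℝ) (hα1 : α ≤ 1) (l₀ : ℝ) (hl₀ : 0 < l₀) :
    (1 / m) * l₀ ^ (-m) *
        (∑ k ∈ Finset.Icc 1 ⌊(N : ℝ) ^ α⌋₊, (k : ℝ) ^ (1 - m) -
          (N : ℝ) * ∑ k ∈ Finset.Icc 1 ⌊(N : ℝ) ^ α⌋₊, (k : ℝ) ^ (-m)) ≤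
      -(1 / (m * (1 - m) * (2 - m))) * l₀ ^ (-m) * (N : ℝ) ^ (1 + α * (1 - m)) +
        (3 / (m * (1 - m))) * l₀ ^ (-m) * (N : ℝ) := by
  set a := (N : ℝ) ^ α
  have hN1 : (1 : ℝ) ≤ N := by exact_mod_cast (by omega : 1 ≤ N)
  have ha0 : 0 ≤ a := by positivity
  have hX : N * a ^ (1 - m) = (N : ℝ) ^ (1 + α * (1 - m)) := by
    rw [← Real.rpow_mul N.cast_nonneg, Real.rpow_add (by linarith : (0 : ℝ) < N), Real.rpow_one]
  set X := (N : ℝ) ^ (1 + α * (1 - m))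
  have hS₀ :=
    rpow_sub_one_le_mul_sum_Icc_floor_rpow_sub_one (by linarith : 0 ≤ 1 - m) (by linarith) ha0
  rw [sub_sub_cancel_left] at hS₀
  have hS₁ := two_sub_mul_sum_Icc_floor_rpow_one_sub_le hN1 hα1 hm0.le hm1.le
  set S₀ := ∑ k ∈ Icc 1 ⌊a⌋₊, (k : ℝ) ^ (-m)
  set S₁ := ∑ k ∈ Icc 1 ⌊a⌋₊, (k : ℝ) ^ (1 - m)
  have key : (1 - m) * (2 - m) * (S₁ - N * S₀) ≤ -X + 3 * (2 - m) * N := by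
    have hvN : 0 ≤ (2 - m) * (N : ℝ) := mul_nonneg (by linarith) N.cast_nonneg
    nlinarith [mul_le_mul_of_nonneg_left hS₁ (by linarith : 0 ≤ 1 - m),
      mul_le_mul_of_nonneg_left hS₀ hvN, mul_nonneg hm0.le hvN]
  have hu : 1 - m ≠ 0 := by linarith
  have hv : 2 - m ≠ 0 := by linarith
  calc _ ≤ 1 / m * l₀ ^ (-m) * ((-X + 3 * (2 - m) * N) / ((1 - m) * (2 - m))) := by
        gcongr
        rw [le_div_iff₀ (by nlinarith)]
        linarith
    _ = _ := by field_simp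

theorem attractive_energy_uniform_train_bound_m01
    (m : ℝ) (hm0 : 0 < m) (hm1 : m < 1) (N : ℕ) (hN : 2 ≤ N)
    (α : ℝ) (hα0 : 0 < α) (hα1 : α ≤ 1) (l₀ : ℝ) (hl₀ : 0 < l₀) :
    (1 / m) * l₀ ^ (-m) *
        (∑ k ∈ Finset.Icc 1 ⌊(N : ℝ) ^ α⌋₊, (k : ℝ) ^ (1 - m) -
          (N : ℝ) * ∑ k ∈ Finset.Icc 1 ⌊(N : ℝ) ^ α⌋₊, (k : ℝ) ^ (-m)) ≤
      -(1 / (m * (1 - m) * (2 - m))) * l₀ ^ (-m) * (N : ℝ) ^ (1 + α * (1 - m)) +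
        (3 / (m * (1 - m))) * l₀ ^ (-m) * (N : ℝ) :=
  attractive_energy_uniform_train_bound_m01_general m hm0 hm1 N hN α hα1 l₀ hl₀
end
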